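/- For all positive integers n, γ(n) ≤ 1, and 1 − γ(n) = Θ(1/n): there exist positive real constants c₁ and c₂ such that for all positive integers n, c₁/n ≤ 1 − γ(n) ≤ c₂/n. -/

import Mathlib

/-!
Write `x = n / 2`, so that `gam n = Γ(x + 1/2)² / (x Γ(x)²)`. Log-convexity of `Γ` at the
midpoint of `x` and `x + 1` gives `Γ(x + 1/2)² ≤ Γ(x) Γ(x + 1) = x Γ(x)²`, i.e. the ratio is at
most `1`; since its values at `x` and `x + 1/2` multiply to `x / (x + 1/2)`, it is also at least
`x / (x + 1/2) = 1 - 1/(2x + 1)`. For the matching lower bound on `1 - gam n` one needs the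
sharper `gam² ≤ x / (x + 1/2)`, after which `1 - gam ≥ (1 - gam²) / 2 ≥ 1/(4x + 2)`. The
sharper bound holds because `gam² · (x + 1/2) / x` increases under `x ↦ x + 1` (by the
functional equation) and tends to `1`.
-/

/-- `gam n = (2/n) * (Γ((n+1)/2) / Γ(n/2))²`. -/
noncomputable def gam (n : ℕ) : ℝ :=
  2 / (n : ℝ) * (Real.Gamma (((n : ℝ) + 1) / 2) / Real.Gamma ((n : ℝ) / 2)) ^ 2

open Real Filter Topology

noncomputable def gammaHalfRatio (x : ℝ) : ℝ := Gamma (x + 1 / 2) ^ 2 / (x * Gamma x ^ 2)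

lemma gam_eq_gammaHalfRatio (n : ℕ) : gam n = gammaHalfRatio (n / 2) := by
  rw [gam, gammaHalfRatio, add_div]
  ring

namespace Real

lemma Gamma_add_half_sq_le {x : ℝ} (hx : 0 < x) : Gamma (x + 1 / 2) ^ 2 ≤ x * Gamma x ^ 2 := by
  have hconv := Gamma_mul_add_mul_le_rpow_Gamma_mul_rpow_Gamma hx (by linarith : 0 < x + 1)
    one_half_pos one_half_pos (add_halves 1)
  rw [← sqrt_eq_rpow, ← sqrt_eq_rpow, ← sqrt_mul (Gamma_pos_of_pos hx).le,
    Gamma_add_one hx.ne', show 1 / 2 * x + 1 / 2 * (x + 1) = x + 1 / 2 by ring] at hconv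
  calc Gamma (x + 1 / 2) ^ 2 ≤ √(Gamma x * (x * Gamma x)) ^ 2 :=
        pow_le_pow_left₀ (Gamma_pos_of_pos (by linarith)).le hconv 2
    _ = x * Gamma x ^ 2 := by
        rw [sq_sqrt (by have := Gamma_pos_of_pos hx; positivity)]
        ring

end Real

namespace gammaHalfRatio

variable {x : ℝ}

lemma pos (hx : 0 < x) : 0 < gammaHalfRatio x := by
  have := Gamma_pos_of_pos hx
  have := Gamma_pos_of_pos (by linarith : 0 < x + 1 / 2)
  unfold gammaHalfRatio
  positivity

lemma le_one (hx : 0 < x) : gammaHalfRatio x ≤ 1 := by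
  have := Gamma_pos_of_pos hx
  exact div_le_one_of_le₀ (Gamma_add_half_sq_le hx) (by positivity)

lemma mul_add_half (hx : 0 < x) :
    gammaHalfRatio x * gammaHalfRatio (x + 1 / 2) = x / (x + 1 / 2) := by
  have := Gamma_pos_of_pos hx
  have := Gamma_pos_of_pos (by linarith : 0 < x + 1 / 2)
  rw [gammaHalfRatio, gammaHalfRatio, add_assoc, add_halves, Gamma_add_one hx.ne']
  field_simp

lemma add_one (hx : 0 < x) :
    gammaHalfRatio (x + 1) = gammaHalfRatio x * ((x + 1 / 2) ^ 2 / (x * (x + 1))) := by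
  have := Gamma_pos_of_pos hx
  rw [gammaHalfRatio, gammaHalfRatio, add_right_comm, Gamma_add_one (by linarith),
    Gamma_add_one hx.ne']
  field_simp

lemma div_add_half_le (hx : 0 < x) : x / (x + 1 / 2) ≤ gammaHalfRatio x := by
  rw [← mul_add_half hx]
  exact mul_le_of_le_one_right (pos hx).le (le_one (by linarith))

lemma one_sub_le (hx : 0 < x) : 1 - gammaHalfRatio x ≤ 1 / (2 * x) := by
  have := div_add_half_le hx
  have : 1 - x / (x + 1 / 2) ≤ 1 / (2 * x) := by
    rw [sub_le_iff_le_add, div_add_div _ _ (by positivity) (by positivity),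
      le_div_iff₀ (by positivity)]
    nlinarith
  linarith

lemma tendsto_one : Tendsto gammaHalfRatio atTop (𝓝 1) := by
  have hlower : Tendsto (fun x : ℝ => 1 - 1 / (2 * x)) atTop (𝓝 1) := by
    simpa using (tendsto_const_nhds (x := (1 : ℝ))).sub ((tendsto_const_nhds (x := (1 : ℝ))).div_atTop
      (tendsto_id.const_mul_atTop (two_pos : (0 : ℝ) < 2)))
  refine tendsto_of_tendsto_of_tendsto_of_le_of_le' hlower tendsto_const_nhds ?_ ?_
  · filter_upwards [eventually_gt_atTop 0] with x hx
    linarith [one_sub_le hx]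
  · filter_upwards [eventually_gt_atTop 0] with x hx
    exact le_one hx

lemma sq_mul_le_add_one (hx : 0 < x) :
    gammaHalfRatio x ^ 2 * ((x + 1 / 2) / x) ≤
      gammaHalfRatio (x + 1) ^ 2 * ((x + 1 + 1 / 2) / (x + 1)) := by
  have hstep : 1 ≤ (x + 1 / 2) ^ 3 * (x + 3 / 2) / (x * (x + 1) ^ 3) := by
    rw [one_le_div (by positivity)]
    nlinarith [pow_pos hx 2, pow_pos hx 3]
  calc gammaHalfRatio x ^ 2 * ((x + 1 / 2) / x)
      ≤ gammaHalfRatio x ^ 2 * ((x + 1 / 2) / x) *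
          ((x + 1 / 2) ^ 3 * (x + 3 / 2) / (x * (x + 1) ^ 3)) :=
        le_mul_of_one_le_right (by have := pos hx; positivity) hstep
    _ = gammaHalfRatio (x + 1) ^ 2 * ((x + 1 + 1 / 2) / (x + 1)) := by
        rw [add_one hx]
        field_simp
        ring

lemma sq_le (hx : 0 < x) : gammaHalfRatio x ^ 2 ≤ x / (x + 1 / 2) := by
  let v : ℝ → ℝ := fun y => gammaHalfRatio y ^ 2 * ((y + 1 / 2) / y)
  have hmono : Monotone fun k : ℕ => v (x + k) := by
    refine monotone_nat_of_le_succ fun k => ?_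
    simpa [v, add_assoc] using sq_mul_le_add_one (by positivity : 0 < x + k)
  have hv : Tendsto v atTop (𝓝 1) := by
    have hfactor : Tendsto (fun y : ℝ => (y + 1 / 2) / y) atTop (𝓝 1) := by
      have h := (tendsto_const_nhds (x := (1 : ℝ))).add
        ((tendsto_const_nhds (x := (1 / 2 : ℝ))).div_atTop tendsto_id)
      rw [add_zero] at h
      refine h.congr' ?_
      filter_upwards [eventually_gt_atTop 0] with y hy
      simp only [id]
      field_simp
    simpa [v] using (tendsto_one.pow 2).mul hfactor
  have hle : v x ≤ 1 := by
    simpa using hmono.ge_of_tendsto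
      (hv.comp (tendsto_atTop_add_const_left _ x tendsto_natCast_atTop_atTop)) 0
  rw [le_div_iff₀ (by positivity)]
  rwa [show v x = gammaHalfRatio x ^ 2 * (x + 1 / 2) / x by simp only [v, mul_div_assoc'],
    div_le_one hx] at hle

lemma div_le_one_sub (hx : 0 < x) : 1 / (4 * x + 2) ≤ 1 - gammaHalfRatio x := by
  have := sq_le hx
  calc 1 / (4 * x + 2) = (1 - x / (x + 1 / 2)) / 2 := by field_simp; ring
    _ ≤ (1 - gammaHalfRatio x ^ 2) / 2 := by linarith
    _ ≤ 1 - gammaHalfRatio x := by nlinarith [sq_nonneg (1 - gammaHalfRatio x)]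

end gammaHalfRatio

theorem stmt16 :
    (∀ n : ℕ, 0 < n → gam n ≤ 1) ∧
      ∃ c₁ c₂ : ℝ, 0 < c₁ ∧ 0 < c₂ ∧
        ∀ n : ℕ, 0 < n → c₁ / n ≤ 1 - gam n ∧ 1 - gam n ≤ c₂ / n := by
  refine ⟨fun n hn => ?_, 1 / 4, 1, by norm_num, one_pos, fun n hn => ?_⟩
  · rw [gam_eq_gammaHalfRatio]
    exact gammaHalfRatio.le_one (by positivity)
  have hn' : (1 : ℝ) ≤ n := by exact_mod_cast hn
  have hx : (0 : ℝ) < n / 2 := by positivity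
  rw [gam_eq_gammaHalfRatio]
  constructor
  · calc 1 / 4 / (n : ℝ) ≤ 1 / (4 * (n / 2) + 2) := by
          rw [div_div, div_le_div_iff₀ (by positivity) (by positivity)]
          linarith
      _ ≤ 1 - gammaHalfRatio (n / 2) := gammaHalfRatio.div_le_one_sub hx
  · simpa [mul_div_cancel₀] using gammaHalfRatio.one_sub_le hx
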